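/- arXiv:math/0305262 — 5 statements merged into one kernel-verified Lean document; each statement's English description precedes it below -/
import Mathlib

section
/- Let u : ℕ → ℝ be a nondecreasing nonnegative function with u(1) ≤ 1, and suppose there exist constants c > 0 and α with 1/2 < α < 2/3 such that u(8n) ≤ 4·u(n) + c·n^α for all n ≥ 1. Then there exists a constant C > 0 such that u(n) ≤ C·n^(2/3) for all n ≥ 1. -/
open Real

/-- If `u : ℕ → ℝ` is nondecreasing, nonnegative, `u 1 ≤ 1`, and satisfies
`u (8n) ≤ 4 u n + c n^α` for all `n ≥ 1`, for some `c > 0` and `1/2 < α < 2/3`,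
then `u n ≤ C n^(2/3)` for all `n ≥ 1`, for some constant `C > 0`. -/
theorem iteration_bound (u : ℕ → ℝ) (hmono : Monotone u) (hnonneg : ∀ n, 0 ≤ u n)
    (hu1 : u 1 ≤ 1) (c α : ℝ) (hc : 0 < c) (hα1 : 1 / 2 < α) (hα2 : α < 2 / 3)
    (hrec : ∀ n : ℕ, 1 ≤ n → u (8 * n) ≤ 4 * u n + c * (n : ℝ) ^ α) :
    ∃ C : ℝ, 0 < C ∧ ∀ n : ℕ, 1 ≤ n → u n ≤ C * (n : ℝ) ^ ((2 : ℝ) / 3) := by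
  have h84 : (8 : ℝ) ^ ((2 : ℝ) / 3) = 4 := by
    have h8 : (8 : ℝ) = (2 : ℝ) ^ ((3 : ℕ) : ℝ) := by
      rw [Real.rpow_natCast]; norm_num
    rw [h8, ← Real.rpow_mul (by norm_num)]
    rw [show ((3 : ℕ) : ℝ) * (2 / 3) = ((2 : ℕ) : ℝ) by push_cast; ring,
      Real.rpow_natCast]
    norm_num
  set s : ℝ := (8 : ℝ) ^ α with hs
  have hs_pos : 0 < s := Real.rpow_pos_of_pos (by norm_num) α
  have hs4 : s < 4 := by
    rw [← h84, hs]
    exact Real.rpow_lt_rpow_of_exponent_lt (by norm_num) hα2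
  set B : ℝ := c / (4 - s) with hB
  have hB_pos : 0 < B := div_pos hc (by linarith)
  have hBs : B * (4 - s) = c := by
    rw [hB, div_mul_cancel₀]; linarith
  -- Key induction: u (8^k) ≤ (1+B) * 4^k - B * s^k
  have key : ∀ k : ℕ, u (8 ^ k) ≤ (1 + B) * 4 ^ k - B * s ^ k := by
    intro k
    induction k with
    | zero => simpa using by linarith [hu1]
    | succ k ih =>
      have h1 : u (8 ^ (k + 1)) = u (8 * 8 ^ k) := by ring_nf
      have h2 : u (8 * 8 ^ k) ≤ 4 * u (8 ^ k) + c * ((8 ^ k : ℕ) : ℝ) ^ α :=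
        hrec (8 ^ k) (Nat.one_le_pow _ _ (by norm_num))
      have h3 : ((8 ^ k : ℕ) : ℝ) ^ α = s ^ k := by
        push_cast
        rw [← Real.rpow_natCast (8 : ℝ) k, ← Real.rpow_mul (by norm_num),
          mul_comm, Real.rpow_mul (by norm_num), Real.rpow_natCast]
      have hsk : 0 < s ^ k := pow_pos hs_pos k
      rw [h1]
      calc u (8 * 8 ^ k) ≤ 4 * u (8 ^ k) + c * s ^ k := by rw [← h3]; exact h2
        _ ≤ 4 * ((1 + B) * 4 ^ k - B * s ^ k) + c * s ^ k := by nlinarith [ih]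
        _ = (1 + B) * 4 ^ (k + 1) - B * s ^ (k + 1) := by
            have : c = B * (4 - s) := hBs.symm
            rw [this]; ring
  refine ⟨4 * (1 + B), by positivity, fun n hn => ?_⟩
  set k := Nat.log 8 n with hk
  have hnk : n < 8 ^ (k + 1) := Nat.lt_pow_succ_log_self (by norm_num) n
  have hkn : 8 ^ k ≤ n := Nat.pow_log_le_self 8 (by omega)
  have h1 : u n ≤ u (8 ^ (k + 1)) := hmono (le_of_lt hnk)
  have h2 : u (8 ^ (k + 1)) ≤ (1 + B) * 4 ^ (k + 1) := by
    have := key (k + 1)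
    nlinarith [pow_pos hs_pos (k + 1)]
  have h3 : (4 : ℝ) ^ k ≤ (n : ℝ) ^ ((2 : ℝ) / 3) := by
    have h8k : ((8 : ℝ) ^ k) ^ ((2 : ℝ) / 3) = 4 ^ k := by
      rw [← Real.rpow_natCast (8 : ℝ) k, ← Real.rpow_mul (by norm_num),
        mul_comm, Real.rpow_mul (by norm_num), h84, Real.rpow_natCast]
    rw [← h8k]
    apply Real.rpow_le_rpow (by positivity) _ (by norm_num)
    exact_mod_cast hkn
  have h4k : (4 : ℝ) ^ (k + 1) = 4 * 4 ^ k := by ring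
  calc u n ≤ (1 + B) * 4 ^ (k + 1) := le_trans h1 h2
    _ = 4 * (1 + B) * 4 ^ k := by ring
    _ ≤ 4 * (1 + B) * (n : ℝ) ^ ((2 : ℝ) / 3) := by
        apply mul_le_mul_of_nonneg_left h3 (by positivity)
end

section
/- Let G be a group generated by symmetric set S = {a, a⁻¹, b, b⁻¹} with word length |·|. Suppose every g ∈ G decomposes as g = (g₁, g₂)ε_* with |g₁| + |g₂| ≤ |g|. Define ν : G → ℕ recursively by ν(g) = min(|g|, 1 + ν(g₁) + ν(g₂)) (with ν(1) = 0). Then ν(g₁) + ν(g₂) ≤ ν(g) ≤ ν(g₁) + ν(g₂) + 1 for all g ≠ 1. -/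
/-- Let `G` be a group with word length `len` (with respect to a symmetric generating
set `{a±1, b±1}`), and suppose every `g` decomposes as `g = (g₁, g₂)ε_*` via maps
`d₁, d₂` with `len (d₁ g) + len (d₂ g) ≤ len g`.  If `ν` satisfies `ν 1 = 0` and the
recursion `ν g = min (len g) (1 + ν (d₁ g) + ν (d₂ g))` for `g ≠ 1`, then
`ν (d₁ g) + ν (d₂ g) ≤ ν g ≤ ν (d₁ g) + ν (d₂ g) + 1` for all `g ≠ 1`. -/
theorem nu_sandwich
    (G : Type*) [Group G]
    (len : G → ℕ) (hlen_one : len 1 = 0)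
    (d₁ d₂ : G → G)
    (hd_one : d₁ 1 = 1 ∧ d₂ 1 = 1)
    (hdecomp : ∀ g : G, len (d₁ g) + len (d₂ g) ≤ len g)
    (ν : G → ℕ) (hν_one : ν 1 = 0)
    (hν : ∀ g : G, g ≠ 1 → ν g = min (len g) (1 + ν (d₁ g) + ν (d₂ g))) :
    ∀ g : G, g ≠ 1 →
      ν (d₁ g) + ν (d₂ g) ≤ ν g ∧ ν g ≤ ν (d₁ g) + ν (d₂ g) + 1 := by
  have hle : ∀ h : G, ν h ≤ len h := by
    intro h
    by_cases hh : h = 1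
    · simp [hh, hν_one, hlen_one]
    · rw [hν h hh]; exact min_le_left _ _
  intro g hg
  have h1 : ν (d₁ g) + ν (d₂ g) ≤ len g :=
    le_trans (Nat.add_le_add (hle _) (hle _)) (hdecomp g)
  rw [hν g hg]
  constructor
  · exact le_min h1 (by omega)
  · exact le_trans (min_le_right _ _) (by omega)
end

section
/- Let ν be as above (ν(g) = min(|g|, 1 + ν(g₁) + ν(g₂))). Then ν satisfies the triangle inequality: ν(gh) ≤ ν(g) + ν(h) for all g, h ∈ G. -/
/-- Triangle inequality for the fractal norm `ν`.  Here `G` is a group with subadditive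
word length `len`, wreath-recursion decomposition maps `d₁, d₂` (the components of
`g = (g₁,g₂)ε_*`, so that the components of a product are products of components,
possibly swapped), and `ν` satisfies `ν 1 = 0`, the recursion
`ν g = min (len g) (1 + ν (d₁ g) + ν (d₂ g))` for `g ≠ 1`, and the sandwich inequality
`ν (d₁ g) + ν (d₂ g) ≤ ν g ≤ ν (d₁ g) + ν (d₂ g) + 1`.  Then
`ν (g h) ≤ ν g + ν h` for all `g, h`. -/
theorem nu_triangle
    (G : Type*) [Group G]
    (len : G → ℕ) (hlen_one : len 1 = 0)
    (hlen_mul : ∀ g h : G, len (g * h) ≤ len g + len h)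
    (d₁ d₂ : G → G)
    (hd_one : d₁ 1 = 1 ∧ d₂ 1 = 1)
    (hdecomp : ∀ g : G, len (d₁ g) + len (d₂ g) ≤ len g)
    (hd_mul : ∀ g h : G,
      (d₁ (g * h) = d₁ g * d₁ h ∧ d₂ (g * h) = d₂ g * d₂ h) ∨
      (d₁ (g * h) = d₁ g * d₂ h ∧ d₂ (g * h) = d₂ g * d₁ h))
    (ν : G → ℕ) (hν_one : ν 1 = 0)
    (hν : ∀ g : G, g ≠ 1 → ν g = min (len g) (1 + ν (d₁ g) + ν (d₂ g)))
    (hsandwich : ∀ g : G, g ≠ 1 →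
      ν (d₁ g) + ν (d₂ g) ≤ ν g ∧ ν g ≤ ν (d₁ g) + ν (d₂ g) + 1) :
    ∀ g h : G, ν (g * h) ≤ ν g + ν h := by

  obtain ⟨hd1, hd2⟩ := hd_one
  have hν_le_len : ∀ g : G, ν g ≤ len g := by
    intro g
    by_cases hg : g = 1
    · simp [hg, hν_one, hlen_one]
    · rw [hν g hg]; exact min_le_left _ _
  have hsub : ∀ g : G, ν (d₁ g) + ν (d₂ g) ≤ ν g := by
    intro g
    by_cases hg : g = 1
    · simp [hg, hd1, hd2, hν_one]
    · exact (hsandwich g hg).1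
  have key : ∀ n : ℕ, ∀ g h : G, ν g + ν h < n → ν (g * h) ≤ ν g + ν h := by
    intro n
    induction n with
    | zero => intro g h hlt; omega
    | succ n IH =>
      intro g h hlt
      by_cases hgh1 : g * h = 1
      · rw [hgh1, hν_one]; exact Nat.zero_le _
      have step : ν (d₁ g) + ν (d₁ h) < n → ν (d₁ g) + ν (d₂ h) < n →
          ν (d₂ g) + ν (d₁ h) < n → ν (d₂ g) + ν (d₂ h) < n →
          ν (g * h) ≤ 1 + (ν (d₁ g) + ν (d₂ g)) + (ν (d₁ h) + ν (d₂ h)) := by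
        intro b11 b12 b21 b22
        have hmain : ν (g * h) ≤ 1 + ν (d₁ (g * h)) + ν (d₂ (g * h)) := by
          rw [hν _ hgh1]; exact min_le_right _ _
        rcases hd_mul g h with ⟨e1, e2⟩ | ⟨e1, e2⟩
        · have i1 := IH (d₁ g) (d₁ h) b11
          have i2 := IH (d₂ g) (d₂ h) b22
          rw [e1, e2] at hmain
          omega
        · have i1 := IH (d₁ g) (d₂ h) b12
          have i2 := IH (d₂ g) (d₁ h) b21
          rw [e1, e2] at hmain
          omega
      by_cases hA : ν g = len g ∧ ν h = len h
      · calc ν (g * h) ≤ len (g * h) := hν_le_len _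
          _ ≤ len g + len h := hlen_mul g h
          _ = ν g + ν h := by rw [hA.1, hA.2]
      · rcases Classical.em (ν g = len g) with hg | hg
        · have hh : ν h ≠ len h := fun hh => hA ⟨hg, hh⟩
          have hh1 : h ≠ 1 := by
            intro h1; exact hh (by rw [h1, hν_one, hlen_one])
          have hrec : ν h = 1 + ν (d₁ h) + ν (d₂ h) := by
            have h' := hν h hh1
            rcases min_choice (len h) (1 + ν (d₁ h) + ν (d₂ h)) with hc | hc <;> omega
          have h1 := hsub g
          have h2 := hsub h
          have := step (by omega) (by omega) (by omega) (by omega)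
          omega
        · have hg1 : g ≠ 1 := by
            intro h1; exact hg (by rw [h1, hν_one, hlen_one])
          have hrec : ν g = 1 + ν (d₁ g) + ν (d₂ g) := by
            have h' := hν g hg1
            rcases min_choice (len g) (1 + ν (d₁ g) + ν (d₂ g)) with hc | hc <;> omega
          have h1 := hsub g
          have h2 := hsub h
          have := step (by omega) (by omega) (by omega) (by omega)
          omega
  intro g h
  exact key (ν g + ν h + 1) g h (by omega)
end

section
/- Let (u_r)_{r>0} be a family of nondecreasing functions ℕ → ℝ≥0 with u_r(1) ≤ 1, satisfying u_r(n) ≤ 2·u_{2/r}(⌈f(r)·n⌉ + ⌈n^α⌉) + C for all n ≥ 1 and some fixed constants C > 0 and α ∈ (1/2, 2/3), where f(r) = (2+r)/(4(1+r)). Then there exists c > 0 such that u_r(n) ≤ c·n^(2/3) for all n. -/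
open Real

lemma aux_rpow_subadd {x y p : ℝ} (hx : 0 ≤ x) (hy : 0 ≤ y) (hp : 0 ≤ p) (hp1 : p ≤ 1) :
    (x + y) ^ p ≤ x ^ p + y ^ p := by
  have h := NNReal.rpow_add_le_add_rpow x.toNNReal y.toNNReal hp hp1
  have := NNReal.coe_le_coe.mpr h
  push_cast [NNReal.coe_rpow, Real.coe_toNNReal x hx, Real.coe_toNNReal y hy] at this
  exact this

lemma aux_823 : (8:ℝ) ^ ((2:ℝ)/3) = 4 := by
  rw [show (8:ℝ) = 2 ^ (3:ℕ) by norm_num, ← Real.rpow_natCast 2 3,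
    ← Real.rpow_mul (by norm_num)]
  norm_num

lemma aux_1000 : (1000:ℝ) ^ ((1:ℝ)/3) = 10 := by
  rw [show (1000:ℝ) = 10 ^ (3:ℕ) by norm_num, ← Real.rpow_natCast 10 3,
    ← Real.rpow_mul (by norm_num)]
  norm_num

set_option maxHeartbeats 1000000 in
/-- Let `(u_r)_{r>0}` be a family of nondecreasing, nonnegative functions `ℕ → ℝ` with
`u_r 1 ≤ 1`, satisfying `u_r n ≤ 2 u_{2/r} (⌈f r · n⌉ + ⌈n^α⌉) + C` for all `n ≥ 1` and
all `r > 0`, where `f r = (2+r)/(4(1+r))`, `C > 0` and `α ∈ (1/2, 2/3)` are fixed.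
Then for each `r > 0` there exists `c > 0` with `u_r n ≤ c n^(2/3)` for all `n ≥ 1`. -/
theorem family_speed_bound
    (f : ℝ → ℝ) (hf : ∀ r : ℝ, 0 < r → f r = (2 + r) / (4 * (1 + r)))
    (u : ℝ → ℕ → ℝ)
    (hmono : ∀ r : ℝ, 0 < r → Monotone (u r))
    (hnonneg : ∀ r : ℝ, 0 < r → ∀ n, 0 ≤ u r n)
    (hone : ∀ r : ℝ, 0 < r → u r 1 ≤ 1)
    (C α : ℝ) (hC : 0 < C) (hα1 : 1 / 2 < α) (hα2 : α < 2 / 3)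
    (hrec : ∀ r : ℝ, 0 < r → ∀ n : ℕ, 1 ≤ n →
      u r n ≤ 2 * u (2 / r) (⌈f r * n⌉₊ + ⌈(n : ℝ) ^ α⌉₊) + C) :
    ∀ r : ℝ, 0 < r → ∃ c : ℝ, 0 < c ∧ ∀ n : ℕ, 1 ≤ n →
      u r n ≤ c * (n : ℝ) ^ ((2 : ℝ) / 3) := by
  intro r hr
  have h2r : 0 < 2/r := by positivity
  have hrne : r ≠ 0 := hr.ne'
  have hfr := hf r hr
  have hfr2 := hf (2/r) h2r
  have h1r : (0:ℝ) < 1 + r := by linarith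
  have h12r : (0:ℝ) < 1 + 2/r := by linarith
  have hfrpos : 0 < f r := by rw [hfr]; positivity
  have hfrle : f r ≤ 1/2 := by
    rw [hfr, div_le_div_iff₀ (by positivity) (by norm_num)]; linarith
  have hf2pos : 0 < f (2/r) := by rw [hfr2]; positivity
  have hf2le : f (2/r) ≤ 1/2 := by
    rw [hfr2, div_le_div_iff₀ (by positivity) (by norm_num)]; linarith
  have hprod : f r * f (2/r) = 1/8 := by
    rw [hfr, hfr2]; field_simp; ring
  have hα0 : 0 < α := by linarith
  have h8p : (0:ℝ) < (8:ℝ)^α := Real.rpow_pos_of_pos (by norm_num) _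
  -- the constant δ
  obtain ⟨δ, hδ, hδ4⟩ : ∃ δ : ℝ, 0 < δ ∧ 1 + δ = 4/(8:ℝ)^α := by
    refine ⟨4/(8:ℝ)^α - 1, ?_, by ring⟩
    have h8 : (8:ℝ)^α < 4 := by
      calc (8:ℝ)^α < 8 ^ ((2:ℝ)/3) := Real.rpow_lt_rpow_of_exponent_lt (by norm_num) hα2
      _ = 4 := aux_823
    have : 1 < 4/(8:ℝ)^α := (one_lt_div h8p).mpr h8
    linarith
  -- the threshold N0
  obtain ⟨N0, hN1000, hQ⟩ : ∃ N0 : ℕ, 1000 ≤ N0 ∧ 80/δ ≤ (N0:ℝ)^((1:ℝ)/6) := by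
    refine ⟨max 1000 ⌈((80/δ)^(6:ℕ) : ℝ)⌉₊, le_max_left _ _, ?_⟩
    have h1 : ((80/δ)^(6:ℕ) : ℝ) ≤ ((max 1000 ⌈((80/δ)^(6:ℕ) : ℝ)⌉₊ : ℕ):ℝ) := by
      refine le_trans (Nat.le_ceil _) ?_
      exact_mod_cast le_max_right 1000 ⌈((80/δ)^(6:ℕ) : ℝ)⌉₊
    have h2 : (((80/δ)^(6:ℕ) : ℝ)) ^ ((1:ℝ)/6) = 80/δ := by
      rw [← Real.rpow_natCast (80/δ) 6, ← Real.rpow_mul (by positivity)]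
      norm_num
    calc 80/δ = (((80/δ)^(6:ℕ) : ℝ)) ^ ((1:ℝ)/6) := h2.symm
    _ ≤ _ := Real.rpow_le_rpow (by positivity) h1 (by norm_num)
  have hN0pos : (0:ℝ) < (N0:ℝ) := by
    exact_mod_cast lt_of_lt_of_le (by norm_num : (0:ℕ) < 1000) hN1000
  have hQpos : 0 < (N0:ℝ)^((1:ℝ)/6) := Real.rpow_pos_of_pos hN0pos _
  have hM0 : 0 ≤ u r N0 := hnonneg r hr N0
  -- the constants c and b
  obtain ⟨c, b, hc0, hb0, hcb, hδb⟩ :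
      ∃ c b : ℝ, 0 < c ∧ 0 ≤ b ∧ u r N0 + 1 ≤ c - b ∧
        δ*b = 40*c/((N0:ℝ)^((1:ℝ)/6)) + 6*C := by
    have hB0 : 0 ≤ 6*C/δ := by positivity
    set Q : ℝ := (N0:ℝ)^((1:ℝ)/6) with hQdef
    refine ⟨2*(u r N0 + 6*C/δ + 1), 40*(2*(u r N0 + 6*C/δ + 1))/(δ*Q) + 6*C/δ,
      by linarith, ?_, ?_, ?_⟩
    · have : 0 ≤ 40*(2*(u r N0 + 6*C/δ + 1))/(δ*Q) := by positivity
      linarith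
    · have hδQ : (80:ℝ) ≤ δ*Q := by
        have := mul_le_mul_of_nonneg_left hQ hδ.le
        rw [mul_div_cancel₀ _ hδ.ne'] at this
        linarith
      have hc0 : (0:ℝ) < 2*(u r N0 + 6*C/δ + 1) := by linarith
      have h40 : 40*(2*(u r N0 + 6*C/δ + 1))/(δ*Q) ≤ (2*(u r N0 + 6*C/δ + 1))/2 := by
        rw [div_le_div_iff₀ (by linarith) (by norm_num)]
        nlinarith [mul_le_mul_of_nonneg_left hδQ hc0.le]
      linarith
    · field_simp
  -- main induction
  have key : ∀ n : ℕ, 1 ≤ n → u r n ≤ c * (n:ℝ) ^ ((2:ℝ)/3) - b * (n:ℝ) ^ α := by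
    intro n
    induction n using Nat.strong_induction_on with
    | _ n IH =>
      intro hn
      have hx0 : (0:ℝ) < (n:ℝ) := by exact_mod_cast hn
      have hx1 : (1:ℝ) ≤ (n:ℝ) := by exact_mod_cast hn
      have hxα1 : 1 ≤ (n:ℝ)^α := Real.one_le_rpow hx1 hα0.le
      have hx23_1 : 1 ≤ (n:ℝ)^((2:ℝ)/3) := Real.one_le_rpow hx1 (by norm_num)
      have hxα23 : (n:ℝ)^α ≤ (n:ℝ)^((2:ℝ)/3) :=
        Real.rpow_le_rpow_of_exponent_le hx1 (le_of_lt hα2)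
      by_cases hcase : n ≤ N0
      · -- base case: small n
        have h1 : u r n ≤ u r N0 := hmono r hr hcase
        have h2 : (c-b)*1 ≤ (c-b)*(n:ℝ)^((2:ℝ)/3) :=
          mul_le_mul_of_nonneg_left hx23_1 (by linarith only [hcb, hM0])
        have h3 : b*(n:ℝ)^α ≤ b*(n:ℝ)^((2:ℝ)/3) := mul_le_mul_of_nonneg_left hxα23 hb0
        linarith only [h1, h2, h3, hcb]
      · -- inductive step: n > N0
        push_neg at hcase
        have hN0n : (1000:ℝ) ≤ (n:ℝ) := by
          have : (1000:ℕ) ≤ n := le_trans hN1000 hcase.le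
          exact_mod_cast this
        -- n^(2/3) ≤ n/10
        have h13 : (10:ℝ) ≤ (n:ℝ)^((1:ℝ)/3) := by
          calc (10:ℝ) = (1000:ℝ)^((1:ℝ)/3) := aux_1000.symm
          _ ≤ (n:ℝ)^((1:ℝ)/3) := Real.rpow_le_rpow (by norm_num) hN0n (by norm_num)
        have h2310 : (n:ℝ)^((2:ℝ)/3) ≤ (n:ℝ)/10 := by
          have hsplit : (n:ℝ)^((2:ℝ)/3) * (n:ℝ)^((1:ℝ)/3) = (n:ℝ) := by
            rw [← Real.rpow_add hx0]; norm_num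
          have hK := mul_le_mul_of_nonneg_left h13
            (le_of_lt (Real.rpow_pos_of_pos hx0 ((2:ℝ)/3)))
          linarith only [hK, hsplit]
        -- intermediate index m1
        set m1 : ℕ := ⌈f r * (n:ℝ)⌉₊ + ⌈(n:ℝ)^α⌉₊ with hm1def
        have hm1pos : 1 ≤ m1 := by
          have : 0 < ⌈(n:ℝ)^α⌉₊ := Nat.ceil_pos.mpr (by positivity)
          omega
        have hcast1 : (m1:ℝ) = (⌈f r * (n:ℝ)⌉₊:ℝ) + (⌈(n:ℝ)^α⌉₊:ℝ) := by
          rw [hm1def]; push_cast; ring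
        have hm1ub : (m1:ℝ) ≤ f r * n + (n:ℝ)^α + 2 := by
          have e1 := (Nat.ceil_lt_add_one (show (0:ℝ) ≤ f r * n by positivity)).le
          have e2 := (Nat.ceil_lt_add_one (show (0:ℝ) ≤ (n:ℝ)^α by positivity)).le
          rw [hcast1]; linarith only [e1, e2]
        have hm1lb : f r * n ≤ (m1:ℝ) := by
          have e1 := Nat.le_ceil (f r * (n:ℝ))
          have e2 : (0:ℝ) ≤ (⌈(n:ℝ)^α⌉₊:ℝ) := by positivity
          rw [hcast1]; linarith only [e1, e2]
        have hm1x : (m1:ℝ) ≤ (n:ℝ) := by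
          have e0 : f r * n ≤ (1/2) * n := mul_le_mul_of_nonneg_right hfrle hx0.le
          linarith only [e0, hm1ub, hxα23, h2310, hN0n]
        -- index after two steps: m2
        set m2 : ℕ := ⌈f (2/r) * (m1:ℝ)⌉₊ + ⌈(m1:ℝ)^α⌉₊ with hm2def
        have hm2pos : 1 ≤ m2 := by
          have : 0 < ⌈(m1:ℝ)^α⌉₊ := Nat.ceil_pos.mpr (by positivity)
          omega
        have hcast2 : (m2:ℝ) = (⌈f (2/r) * (m1:ℝ)⌉₊:ℝ) + (⌈(m1:ℝ)^α⌉₊:ℝ) := by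
          rw [hm2def]; push_cast; ring
        -- two applications of the recursion
        have hs1 := hrec r hr n hn
        rw [← hm1def] at hs1
        have hs2 := hrec (2/r) h2r m1 hm1pos
        rw [show (2:ℝ)/(2/r) = r by field_simp, ← hm2def] at hs2
        have hstep : u r n ≤ 4 * u r m2 + 3*C := by linarith only [hs1, hs2]
        -- bounds on m2
        have hq8 : f (2/r) * (f r * (n:ℝ)) = (n:ℝ)/8 := by
          have : f (2/r) * f r = 1/8 := by rw [mul_comm]; exact hprod
          linear_combination (n:ℝ) * this
        have hm2lb : (n:ℝ)/8 ≤ (m2:ℝ) := by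
          have e1 : f (2/r) * (f r * (n:ℝ)) ≤ f (2/r) * (m1:ℝ) :=
            mul_le_mul_of_nonneg_left hm1lb hf2pos.le
          have e2 := Nat.le_ceil (f (2/r) * (m1:ℝ))
          have e3 : (0:ℝ) ≤ (⌈(m1:ℝ)^α⌉₊:ℝ) := by positivity
          have e1' : (n:ℝ)/8 ≤ f (2/r) * (m1:ℝ) := by rw [← hq8]; exact e1
          rw [hcast2]; linarith only [e1', e2, e3]
        have hm1α : (m1:ℝ)^α ≤ (n:ℝ)^α :=
          Real.rpow_le_rpow (Nat.cast_nonneg m1) hm1x hα0.le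
        have hm2ub : (m2:ℝ) ≤ (n:ℝ)/8 + 5*(n:ℝ)^α := by
          have e1 := (Nat.ceil_lt_add_one (show (0:ℝ) ≤ f (2/r) * (m1:ℝ) by positivity)).le
          have e2 := (Nat.ceil_lt_add_one (show (0:ℝ) ≤ (m1:ℝ)^α by positivity)).le
          have e3 : f (2/r) * (m1:ℝ) ≤ f (2/r) * (f r * n + (n:ℝ)^α + 2) :=
            mul_le_mul_of_nonneg_left hm1ub hf2pos.le
          have e4 : f (2/r) * (f r * n + (n:ℝ)^α + 2)
              = (n:ℝ)/8 + f (2/r) * ((n:ℝ)^α + 2) := by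
            linear_combination hq8
          have e5 : f (2/r) * ((n:ℝ)^α + 2) ≤ (1/2) * ((n:ℝ)^α + 2) :=
            mul_le_mul_of_nonneg_right hf2le (by positivity)
          rw [hcast2]; linarith only [e1, e2, e3, e4, e5, hm1α, hxα1]
        -- descent
        have hdesc : m2 < n := by
          have : (m2:ℝ) < (n:ℝ) := by
            linarith only [hm2ub, hxα23, h2310, hx0]
          exact_mod_cast this
        have hIH := IH m2 hdesc hm2pos
        -- rpow estimates
        have h23a : ((m2:ℝ))^((2:ℝ)/3)
            ≤ (n:ℝ)^((2:ℝ)/3)/4 + 5*(n:ℝ)^(α*((2:ℝ)/3)) := by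
          have e0 : (0:ℝ) ≤ (m2:ℝ) := Nat.cast_nonneg _
          calc ((m2:ℝ))^((2:ℝ)/3)
              ≤ ((n:ℝ)/8 + 5*(n:ℝ)^α)^((2:ℝ)/3) :=
                Real.rpow_le_rpow e0 hm2ub (by norm_num)
          _ ≤ ((n:ℝ)/8)^((2:ℝ)/3) + (5*(n:ℝ)^α)^((2:ℝ)/3) :=
                aux_rpow_subadd (by positivity) (by positivity) (by norm_num) (by norm_num)
          _ = (n:ℝ)^((2:ℝ)/3)/4 + 5^((2:ℝ)/3) * ((n:ℝ)^α)^((2:ℝ)/3) := by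
                rw [Real.div_rpow hx0.le (by norm_num : (0:ℝ) ≤ 8), aux_823,
                  Real.mul_rpow (by norm_num) (by positivity)]
          _ ≤ (n:ℝ)^((2:ℝ)/3)/4 + 5*(n:ℝ)^(α*((2:ℝ)/3)) := by
                have e1 : ((n:ℝ)^α)^((2:ℝ)/3) = (n:ℝ)^(α*((2:ℝ)/3)) :=
                  (Real.rpow_mul hx0.le α ((2:ℝ)/3)).symm
                have e2 : (5:ℝ)^((2:ℝ)/3) ≤ 5 := by
                  calc (5:ℝ)^((2:ℝ)/3) ≤ 5^((1:ℝ)) :=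
                        Real.rpow_le_rpow_of_exponent_le (by norm_num) (by norm_num)
                  _ = 5 := Real.rpow_one 5
                have e3 : (0:ℝ) ≤ (n:ℝ)^(α*((2:ℝ)/3)) := by positivity
                rw [e1]
                have hK := mul_le_mul_of_nonneg_right e2 e3
                linarith only [hK]
        have hαQ : (n:ℝ)^(α*((2:ℝ)/3)) ≤ (n:ℝ)^α / ((N0:ℝ)^((1:ℝ)/6)) := by
          have e1 : (n:ℝ)^(α*((2:ℝ)/3)) ≤ (n:ℝ)^(α - (1:ℝ)/6) :=
            Real.rpow_le_rpow_of_exponent_le hx1 (by linarith)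
          have e2 : (n:ℝ)^(α - (1:ℝ)/6) = (n:ℝ)^α / (n:ℝ)^((1:ℝ)/6) :=
            Real.rpow_sub hx0 α ((1:ℝ)/6)
          have e3 : (N0:ℝ)^((1:ℝ)/6) ≤ (n:ℝ)^((1:ℝ)/6) := by
            exact Real.rpow_le_rpow (Nat.cast_nonneg _) (by exact_mod_cast hcase.le)
              (by norm_num)
          have e4 : (n:ℝ)^α / (n:ℝ)^((1:ℝ)/6) ≤ (n:ℝ)^α / ((N0:ℝ)^((1:ℝ)/6)) :=
            div_le_div_of_nonneg_left (by positivity) hQpos e3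
          calc (n:ℝ)^(α*((2:ℝ)/3)) ≤ (n:ℝ)^(α - (1:ℝ)/6) := e1
          _ = (n:ℝ)^α / (n:ℝ)^((1:ℝ)/6) := e2
          _ ≤ (n:ℝ)^α / ((N0:ℝ)^((1:ℝ)/6)) := e4
        have hm2α : (n:ℝ)^α/(8:ℝ)^α ≤ (m2:ℝ)^α := by
          have := Real.rpow_le_rpow (by positivity) hm2lb hα0.le
          rwa [Real.div_rpow hx0.le (by norm_num : (0:ℝ) ≤ 8)] at this
        -- key numeric inequality
        have hkey2 : 20*c*((n:ℝ)^α/((N0:ℝ)^((1:ℝ)/6))) + 3*C ≤ δ*b*(n:ℝ)^α := by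
          have h1 : δ*b*(n:ℝ)^α = 40*c*((n:ℝ)^α/((N0:ℝ)^((1:ℝ)/6))) + 6*C*(n:ℝ)^α := by
            rw [hδb]; field_simp
          rw [h1]
          have h2 : 0 ≤ c*((n:ℝ)^α/((N0:ℝ)^((1:ℝ)/6))) := by positivity
          have hK := mul_le_mul_of_nonneg_left hxα1 (show (0:ℝ) ≤ 6*C by linarith only [hC])
          linarith only [h2, hK, hC]
        -- combine everything
        have hA : 4*(c * (m2:ℝ)^((2:ℝ)/3))
            ≤ c*(n:ℝ)^((2:ℝ)/3) + 20*c*((n:ℝ)^α/((N0:ℝ)^((1:ℝ)/6))) := by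
          have e1 := mul_le_mul_of_nonneg_left h23a hc0.le
          have e2 := mul_le_mul_of_nonneg_left hαQ (show (0:ℝ) ≤ 20*c by linarith only [hc0])
          linarith only [e1, e2]
        have hB : (1+δ)*(b*(n:ℝ)^α) ≤ 4*(b*(m2:ℝ)^α) := by
          have e1 := mul_le_mul_of_nonneg_left hm2α hb0
          have e2 : (1+δ)*(b*(n:ℝ)^α) = 4*(b*((n:ℝ)^α/(8:ℝ)^α)) := by
            rw [hδ4]; field_simp
          rw [e2]; linarith only [e1]
        calc u r n ≤ 4 * u r m2 + 3*C := hstep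
        _ ≤ 4*(c*(m2:ℝ)^((2:ℝ)/3) - b*(m2:ℝ)^α) + 3*C := by linarith only [hIH]
        _ ≤ c * (n:ℝ)^((2:ℝ)/3) - b*(n:ℝ)^α := by linarith only [hA, hB, hkey2]
  refine ⟨c, hc0, fun n hn => ?_⟩
  have h1 := key n hn
  have h2 : 0 ≤ b * (n:ℝ)^α := mul_nonneg hb0 (Real.rpow_nonneg (Nat.cast_nonneg n) α)
  linarith only [h1, h2]
end

section
/- Let T be as in the previous statement on the open simplex of positive probability vectors in ℝ^k. Then T^k is the identity map, i.e., applying T k times to any positive probability vector μ returns μ. -/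
/-!
`T` is the projective action of the linear map `L v = (v_k/2, v₁, …, v_{k−1})`: on vectors of
sum `1`, `T v = L v / ∑ L v`. So on positive vectors `Tⁿ μ` is the normalization of `Lⁿ μ`, and
`Lᵏ = ½ • id` because in `k` steps every coordinate passes through the halved slot exactly once.
-/

/-- The map `T` on vectors `μ = (m₁, …, m_k)`:
`T μ = (m_k/2, m₁, …, m_{k−1}) / (1 − m_k/2)`. -/
noncomputable def Tmap (k : ℕ) (hk : 0 < k) (μ : Fin k → ℝ) : Fin k → ℝ :=
  fun i =>
    if (i : ℕ) = 0 then (μ ⟨k - 1, by omega⟩ / 2) / (1 - μ ⟨k - 1, by omega⟩ / 2)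
    else μ ⟨(i : ℕ) - 1, by omega⟩ / (1 - μ ⟨k - 1, by omega⟩ / 2)

section NormalizeSum

variable {ι : Type*} [Fintype ι]

noncomputable def normalizeSum (v : ι → ℝ) : ι → ℝ := (∑ i, v i)⁻¹ • v

lemma sum_normalizeSum {v : ι → ℝ} (hv : ∑ i, v i ≠ 0) : ∑ i, normalizeSum v i = 1 := by
  simp only [normalizeSum, Pi.smul_apply, smul_eq_mul, ← Finset.mul_sum, inv_mul_cancel₀ hv]

lemma normalizeSum_smul {c : ℝ} (hc : c ≠ 0) (v : ι → ℝ) :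
    normalizeSum (c • v) = normalizeSum v := by
  simp only [normalizeSum, Pi.smul_apply, smul_eq_mul, ← Finset.mul_sum, smul_smul]
  congr 1
  field_simp

lemma normalizeSum_of_sum_eq_one {v : ι → ℝ} (hv : ∑ i, v i = 1) : normalizeSum v = v := by
  simp [normalizeSum, hv]

end NormalizeSum

section ShiftHalf

variable {k : ℕ} (hk : 0 < k)

noncomputable def shiftHalf (v : Fin k → ℝ) : Fin k → ℝ :=
  fun i => if (i : ℕ) = 0 then v ⟨k - 1, by omega⟩ / 2 else v ⟨(i : ℕ) - 1, by omega⟩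

lemma shiftHalf_smul (c : ℝ) (v : Fin k → ℝ) : shiftHalf hk (c • v) = c • shiftHalf hk v := by
  funext i
  simp only [shiftHalf, Pi.smul_apply, smul_eq_mul]
  split_ifs <;> ring

lemma shiftHalf_pos {v : Fin k → ℝ} (hv : ∀ i, 0 < v i) (i : Fin k) : 0 < shiftHalf hk v i := by
  unfold shiftHalf
  split_ifs
  exacts [half_pos (hv _), hv _]

lemma sum_shiftHalf (v : Fin k → ℝ) :
    ∑ i, shiftHalf hk v i = ∑ i, v i - v ⟨k - 1, by omega⟩ / 2 := by
  obtain ⟨n, rfl⟩ : ∃ n, k = n + 1 := ⟨k - 1, by omega⟩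
  rw [Fin.sum_univ_succ, Fin.sum_univ_castSucc (f := v)]
  have h_succ (i : Fin n) : shiftHalf hk v i.succ = v i.castSucc :=
    if_neg (Nat.succ_ne_zero _)
  simp only [h_succ]
  simp only [shiftHalf, Fin.val_zero, if_true, add_tsub_cancel_right]
  rw [← Fin.last]
  ring

lemma Tmap_eq_normalizeSum_shiftHalf {μ : Fin k → ℝ} (hμ : ∑ i, μ i = 1) :
    Tmap k hk μ = normalizeSum (shiftHalf hk μ) := by
  funext i
  rw [normalizeSum, sum_shiftHalf, hμ]
  simp only [Pi.smul_apply, smul_eq_mul, Tmap, shiftHalf]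
  split_ifs <;> rw [div_eq_inv_mul]

lemma Tmap_normalizeSum {v : Fin k → ℝ} (hv : ∑ i, v i ≠ 0) :
    Tmap k hk (normalizeSum v) = normalizeSum (shiftHalf hk v) := by
  rw [Tmap_eq_normalizeSum_shiftHalf hk (sum_normalizeSum hv)]
  exact (congrArg normalizeSum (shiftHalf_smul hk _ v)).trans
    (normalizeSum_smul (inv_ne_zero hv) _)

lemma Tmap_iterate_normalizeSum {v : Fin k → ℝ} (hv : ∀ i, 0 < v i) (n : ℕ) :
    (Tmap k hk)^[n] (normalizeSum v) = normalizeSum ((shiftHalf hk)^[n] v) := by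
  induction n with
  | zero => rfl
  | succ n ih =>
    have hpos : ∀ i, 0 < (shiftHalf hk)^[n] v i :=
      Function.Iterate.rec (fun w : Fin k → ℝ => ∀ i, 0 < w i) hv (fun _ => shiftHalf_pos hk) n
    rw [Function.iterate_succ_apply', ih, Tmap_normalizeSum hk
      (Finset.sum_pos (fun i _ => hpos i) ⟨⟨0, hk⟩, Finset.mem_univ _⟩).ne',
      Function.iterate_succ_apply']

lemma shiftHalf_iterate_apply (v : Fin k → ℝ) {n : ℕ} (hn : n ≤ k) (i : Fin k) :
    (shiftHalf hk)^[n] v i =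
      if h : (i : ℕ) < n then v ⟨i + k - n, by omega⟩ / 2 else v ⟨i - n, by omega⟩ := by
  induction n generalizing i with
  | zero => simp
  | succ n ih =>
    rw [Function.iterate_succ_apply', shiftHalf]
    simp only [ih (Nat.le_of_succ_le hn)]
    split_ifs <;> first | omega | (congr 3; omega) | (congr 2; omega)

lemma shiftHalf_iterate_self (v : Fin k → ℝ) : (shiftHalf hk)^[k] v = (2⁻¹ : ℝ) • v := by
  funext i
  rw [shiftHalf_iterate_apply hk v le_rfl, dif_pos i.isLt, Pi.smul_apply, smul_eq_mul,
    inv_mul_eq_div]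
  simp

end ShiftHalf

/-- On positive probability vectors, `T^k` is the identity: applying `T` `k` times to
any `μ` with all entries positive and total sum `1` returns `μ`. -/
theorem Tmap_iterate_k (k : ℕ) (hk : 0 < k) (μ : Fin k → ℝ)
    (hpos : ∀ i, 0 < μ i) (hsum : ∑ i, μ i = 1) :
    (Tmap k hk)^[k] μ = μ := by
  calc (Tmap k hk)^[k] μ = (Tmap k hk)^[k] (normalizeSum μ) := by
        rw [normalizeSum_of_sum_eq_one hsum]
    _ = normalizeSum ((shiftHalf hk)^[k] μ) := Tmap_iterate_normalizeSum hk hpos k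
    _ = normalizeSum μ := by rw [shiftHalf_iterate_self, normalizeSum_smul (by norm_num)]
    _ = μ := normalizeSum_of_sum_eq_one hsum
end
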